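/- For all n ≥ 2, the number of permutations of length n avoiding both 132 and 123 satisfies the recurrence a_n = 2·a_{n−1}, with a_1 = 1; equivalently the generating function of |Av_n(132, 123)| is (1−x)/(1−2x). -/

import Mathlib

def Avoids132 {n : ℕ} (π : Fin n → Fin n) : Prop :=
  ¬ ∃ i j k : Fin n, i < j ∧ j < k ∧ π i < π k ∧ π k < π j

def Avoids123 {n : ℕ} (π : Fin n → Fin n) : Prop :=
  ¬ ∃ i j k : Fin n, i < j ∧ j < k ∧ π i < π j ∧ π j < π k

/-!
Complementing the values, `π ↦ Fin.rev ∘ π`, turns `Av(132, 123)` into `Av(312, 321)`: the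
permutations in which no entry is followed by two smaller ones. Such a permutation of `n ≥ 2`
points must start with `0` or `1`, and `Perm.decomposeFin` then relabels the remaining entries
order-preservingly into a permutation of `n - 1` points, which again lies in `Av(312, 321)`;
conversely both starting values extend every such permutation.
-/

open Equiv

def Avoids312And321 {α : Type*} [Preorder α] {n : ℕ} (σ : Fin n → α) : Prop :=
  ¬ ∃ i j k : Fin n, i < j ∧ j < k ∧ σ j < σ i ∧ σ k < σ i

theorem avoids312And321_rev_comp_iff {n : ℕ} {π : Fin n → Fin n} (hπ : π.Injective) :
    Avoids312And321 (Fin.rev ∘ π) ↔ Avoids132 π ∧ Avoids123 π := by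
  simp only [Avoids312And321, Avoids132, Avoids123, Function.comp_apply, Fin.rev_lt_rev,
    ← not_or, ← exists_or]
  refine not_congr (exists₃_congr fun i j k => ?_)
  constructor
  · rintro ⟨hij, hjk, hj, hk⟩
    rcases lt_trichotomy (π j) (π k) with h | h | h
    · exact Or.inr ⟨hij, hjk, hj, h⟩
    · exact absurd (hπ h) hjk.ne
    · exact Or.inl ⟨hij, hjk, hk, h⟩
  · rintro (⟨hij, hjk, hk, h⟩ | ⟨hij, hjk, hj, h⟩)
    · exact ⟨hij, hjk, hk.trans h, hk⟩
    · exact ⟨hij, hjk, hj, hj.trans h⟩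

theorem StrictMono.avoids312And321_comp_iff {α β : Type*} [LinearOrder α] [Preorder β] {n : ℕ}
    {f : α → β} (hf : StrictMono f) {σ : Fin n → α} :
    Avoids312And321 (f ∘ σ) ↔ Avoids312And321 σ := by
  simp only [Avoids312And321, Function.comp_apply, hf.lt_iff_lt]

theorem avoids312And321_iff_tail {α : Type*} [Preorder α] {n : ℕ} {σ : Fin (n + 1) → α} :
    Avoids312And321 σ ↔
      (¬ ∃ j k : Fin n, j < k ∧ σ j.succ < σ 0 ∧ σ k.succ < σ 0) ∧
        Avoids312And321 (Fin.tail σ) := by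
  simp only [Avoids312And321, Fin.exists_fin_succ, Fin.tail, ← not_or]
  simp [Fin.succ_pos]

theorem exists_two_later_lt_apply_zero_iff {n : ℕ} (σ : Perm (Fin (n + 2))) :
    (∃ j k : Fin (n + 1), j < k ∧ σ j.succ < σ 0 ∧ σ k.succ < σ 0) ↔ 1 < σ 0 := by
  constructor
  · rintro ⟨j, k, hjk, hj, hk⟩
    by_contra! h
    have hjk' : σ j.succ = σ k.succ := by
      rw [Fin.lt_def] at hj hk
      rw [Fin.le_def, Fin.val_one] at h
      rw [Fin.ext_iff]
      omega
    exact hjk.ne (Fin.succ_injective _ (σ.injective hjk'))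
  · intro h1
    have later : ∀ v, v < σ 0 → ∃ a : Fin (n + 1), σ a.succ = v := fun v hv => by
      obtain ⟨a, ha⟩ := (Fin.exists_succ_eq (x := σ.symm v)).mpr fun h0 => by
        rw [← h0, apply_symm_apply] at hv; exact hv.false
      exact ⟨a, by rw [ha, apply_symm_apply]⟩
    have h0 : 0 < σ 0 := (Fin.zero_le 1).trans_lt h1
    obtain ⟨a, ha⟩ := later 0 h0
    obtain ⟨b, hb⟩ := later 1 h1
    have hab : a ≠ b := by rintro rfl; exact zero_ne_one (ha.symm.trans hb)
    have ha' : σ a.succ < σ 0 := by rwa [ha]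
    have hb' : σ b.succ < σ 0 := by rwa [hb]
    rcases hab.lt_or_gt with hab | hab
    exacts [⟨a, b, hab, ha', hb'⟩, ⟨b, a, hab, hb', ha'⟩]

theorem strictMono_swap_zero_succ {n : ℕ} {p : Fin (n + 2)} (hp : p ≤ 1) :
    StrictMono fun a : Fin (n + 1) => swap 0 p a.succ := by
  obtain rfl | rfl : p = 0 ∨ p = 1 := by
    rw [Fin.le_def, Fin.val_one] at hp; simp only [Fin.ext_iff, Fin.val_zero, Fin.val_one]; omega
  · simpa only [swap_self, refl_apply] using Fin.strictMono_succ
  · refine Fin.strictMono_iff_lt_succ.mpr fun i => ?_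
    simp only [swap_apply_def, Fin.ext_iff, Fin.lt_def]
    split_ifs <;> simp_all

theorem avoids312And321_decomposeFin_symm_iff {n : ℕ} (p : Fin (n + 2))
    (e : Perm (Fin (n + 1))) :
    Avoids312And321 ⇑(Perm.decomposeFin.symm (p, e)) ↔ p ≤ 1 ∧ Avoids312And321 ⇑e := by
  have htail : Fin.tail ⇑(Perm.decomposeFin.symm (p, e)) = (fun a => swap 0 p a.succ) ∘ ⇑e :=
    funext (Perm.decomposeFin_symm_apply_succ e p)
  rw [avoids312And321_iff_tail, exists_two_later_lt_apply_zero_iff, not_lt,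
    Perm.decomposeFin_symm_apply_zero, htail]
  exact and_congr_right fun hp => (strictMono_swap_zero_succ hp).avoids312And321_comp_iff

theorem card_fin_le_one (n : ℕ) : Nat.card {p : Fin (n + 2) // p ≤ 1} = 2 := by
  change Nat.card (Set.Iic (1 : Fin (n + 2))) = 2
  rw [Nat.card_eq_card_toFinset, Set.toFinset_Iic, Fin.card_Iic]
  rfl

theorem card_avoids312And321_succ_succ (n : ℕ) :
    Nat.card {σ : Perm (Fin (n + 2)) // Avoids312And321 ⇑σ} =
      2 * Nat.card {e : Perm (Fin (n + 1)) // Avoids312And321 ⇑e} := by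
  have hdecomp : {σ : Perm (Fin (n + 2)) // Avoids312And321 ⇑σ} ≃
      {x : Fin (n + 2) × Perm (Fin (n + 1)) // x.1 ≤ 1 ∧ Avoids312And321 ⇑x.2} :=
    Perm.decomposeFin.subtypeEquiv fun σ => by
      conv_lhs => rw [← Perm.decomposeFin.symm_apply_apply σ]
      exact avoids312And321_decomposeFin_symm_iff _ _
  have hsplit := subtypeProdEquivProd (p := fun p : Fin (n + 2) => p ≤ 1)
    (q := fun e : Perm (Fin (n + 1)) => Avoids312And321 ⇑e)
  rw [Nat.card_congr (hdecomp.trans hsplit), Nat.card_prod, card_fin_le_one]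

theorem card_avoids132_123_eq (n : ℕ) :
    Nat.card {π : Perm (Fin n) // Avoids132 ⇑π ∧ Avoids123 ⇑π} =
      Nat.card {σ : Perm (Fin n) // Avoids312And321 ⇑σ} :=
  Nat.card_congr <| (Equiv.mulLeft Fin.revPerm).subtypeEquiv fun π =>
    (avoids312And321_rev_comp_iff π.injective).symm

theorem count_av132_123_recurrence :
    Nat.card {π : Equiv.Perm (Fin 1) // Avoids132 ⇑π ∧ Avoids123 ⇑π} = 1 ∧
    ∀ n : ℕ, 2 ≤ n →
      Nat.card {π : Equiv.Perm (Fin n) // Avoids132 ⇑π ∧ Avoids123 ⇑π} =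
        2 * Nat.card {π : Equiv.Perm (Fin (n - 1)) //
              Avoids132 ⇑π ∧ Avoids123 ⇑π} := by
  refine ⟨?_, fun n hn => ?_⟩
  · rw [Nat.card_eq_one_iff_unique]
    have no_lt : ∀ i j : Fin 1, ¬ i < j := by decide
    exact ⟨inferInstance, ⟨⟨1, fun ⟨i, j, _, hij, _⟩ => no_lt i j hij,
      fun ⟨i, j, _, hij, _⟩ => no_lt i j hij⟩⟩⟩
  · obtain ⟨m, rfl⟩ := Nat.exists_eq_add_of_le' hn
    rw [show m + 2 - 1 = m + 1 from rfl, card_avoids132_123_eq, card_avoids132_123_eq,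
      card_avoids312And321_succ_succ]
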